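/- arXiv:math/9912176 — 10 statements merged into one kernel-verified Lean document; each statement's English description precedes it below -/
import Mathlib

section
/- Let G be a group, let p and q be distinct primes, let e ≥ 1, and let a, b ∈ G with orderOf a = p, orderOf b = q^e, and b * a * b⁻¹ = a^r for a natural number r with r^q ≡ 1 (mod p). Then orderOf (a * b^q) = p * q^(e-1). -/
theorem order_of_a_mul_b_pow_q (G : Type*) [Group G] (p q e r : ℕ)
    (hp : p.Prime) (hq : q.Prime) (hpq : p ≠ q) (he : 1 ≤ e) (a b : G)
    (ha : orderOf a = p) (hb : orderOf b = q ^ e)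
    (hconj : b * a * b⁻¹ = a ^ r) (hr : r ^ q ≡ 1 [MOD p]) :
    orderOf (a * b ^ q) = p * q ^ (e - 1) := by
  have key : ∀ k : ℕ, b ^ k * a * (b ^ k)⁻¹ = a ^ (r ^ k) := by
    intro k
    induction k with
    | zero => simp
    | succ n ih =>
      have : b ^ (n + 1) * a * (b ^ (n + 1))⁻¹
          = b * (b ^ n * a * (b ^ n)⁻¹) * b⁻¹ := by
        group
      rw [this, ih]
      have hc : b * a ^ (r ^ n) * b⁻¹ = (b * a * b⁻¹) ^ (r ^ n) := by
        simp [conj_pow]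
      rw [hc, hconj, ← pow_mul, pow_succ, mul_comm]
  have hcomm : Commute a (b ^ q) := by
    have h1 : b ^ q * a * (b ^ q)⁻¹ = a ^ (r ^ q) := key q
    have h2 : a ^ (r ^ q) = a ^ 1 := by
      rw [pow_eq_pow_iff_modEq, ha]
      exact hr
    rw [h2, pow_one] at h1
    have : b ^ q * a = a * b ^ q := by
      calc b ^ q * a = (b ^ q * a * (b ^ q)⁻¹) * b ^ q := by group
        _ = a * b ^ q := by rw [h1]
    exact (this).symm
  have hordbq : orderOf (b ^ q) = q ^ (e - 1) := by
    rw [orderOf_pow' b hq.ne_zero, hb]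
    have hg : Nat.gcd (q ^ e) q = q := Nat.gcd_eq_right (dvd_pow_self q (by omega))
    rw [hg]
    rcases Nat.exists_eq_add_of_le he with ⟨k, hk⟩
    subst hk
    simp [pow_succ, Nat.mul_div_cancel_left _ (Nat.pos_of_ne_zero hq.ne_zero), pow_add,
      Nat.mul_div_cancel _ hq.pos]
  have hcop : Nat.Coprime (orderOf a) (orderOf (b ^ q)) := by
    rw [ha, hordbq]
    exact (Nat.Coprime.pow_right _ ((Nat.coprime_primes hp hq).mpr hpq))
  rw [hcomm.orderOf_mul_eq_mul_orderOf_of_coprime hcop, ha, hordbq]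
end

section
/- Let n > 1 be odd. Then in the dihedral group DihedralGroup n of order 2n, every subgroup whose order is p² for a prime p is cyclic; however, there exist primes p and q together with a subgroup of order p·q that is not cyclic. -/
/-!
A subgroup of odd order contains no reflection, since reflections have order 2, so it lies in the
cyclic group of rotations. When `n` is odd, `p ^ 2 ∣ 2 * n` forces `p` to be odd, so subgroups of
order `p ^ 2` are cyclic. On the other hand, for a prime `q ∣ n` the rotations by multiples of
`n / q` together with the reflections they generate form a copy of the noncommutative group
`DihedralGroup q` of order `2 * q`.
-/

open Function

theorem ZMod.lift_zmultiplesHom_injective {A : Type*} [AddGroup A] (a : A) :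
    Injective (ZMod.lift (addOrderOf a)
      ⟨zmultiplesHom A a, by simp [addOrderOf_nsmul_eq_zero]⟩) := by
  rw [injective_iff_map_eq_zero]
  intro x hx
  obtain ⟨k, rfl⟩ := ZMod.intCast_surjective x
  rw [ZMod.lift_coe, zmultiplesHom_apply, ← addOrderOf_dvd_iff_zsmul_eq_zero] at hx
  exact (ZMod.intCast_zmod_eq_zero_iff_dvd k _).mpr hx

theorem exists_injective_zmod_addMonoidHom_of_prime_dvd {A : Type*} [AddGroup A] [Finite A]
    {p : ℕ} (hp : p.Prime) (hpA : p ∣ Nat.card A) : ∃ ψ : ZMod p →+ A, Injective ψ := by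
  have := Fact.mk hp
  obtain ⟨a, ha⟩ := exists_prime_addOrderOf_dvd_card' p hpA
  subst ha
  exact ⟨_, ZMod.lift_zmultiplesHom_injective a⟩

namespace DihedralGroup

variable {m n : ℕ}

def map (ψ : ZMod m →+ ZMod n) : DihedralGroup m →* DihedralGroup n where
  toFun
    | r i => r (ψ i)
    | sr i => sr (ψ i)
  map_one' := by simp [one_def, -r_zero]
  map_mul' := by
    rintro (i | i) (j | j) <;> simp [r_mul_r, r_mul_sr, sr_mul_r, sr_mul_sr, map_add, map_sub]

@[simp]
theorem map_r (ψ : ZMod m →+ ZMod n) (i : ZMod m) : map ψ (r i) = r (ψ i) := rfl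

@[simp]
theorem map_sr (ψ : ZMod m →+ ZMod n) (i : ZMod m) : map ψ (sr i) = sr (ψ i) := rfl

theorem map_injective {ψ : ZMod m →+ ZMod n} (hψ : Injective ψ) : Injective (map ψ) := by
  rintro (i | i) (j | j) h <;>
    simp only [map_r, map_sr, r.injEq, sr.injEq, reduceCtorEq] at h ⊢ <;> exact hψ h

theorem exists_subgroup_natCard_eq_two_mul_not_isCyclic [NeZero n] {q : ℕ} (hq : q.Prime)
    (hqn : q ∣ n) : ∃ H : Subgroup (DihedralGroup n), Nat.card H = 2 * q ∧ ¬ IsCyclic H := by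
  obtain ⟨ψ, hψ⟩ := exists_injective_zmod_addMonoidHom_of_prime_dvd hq (A := ZMod n)
    (by rwa [Nat.card_zmod])
  let e : DihedralGroup q ≃* (map ψ).range := MonoidHom.ofInjective (map_injective hψ)
  refine ⟨(map ψ).range, ?_, fun hcyc => not_isCyclic hq.one_lt.ne' ?_⟩
  · rw [← Nat.card_congr e.toEquiv, nat_card]
  · exact isCyclic_of_surjective e.symm.toMonoidHom e.symm.surjective

theorem r_mem_zpowers_r_one (i : ZMod n) : r i ∈ Subgroup.zpowers (r 1) := by
  obtain ⟨k, rfl⟩ := ZMod.intCast_surjective i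
  exact ⟨k, r_one_zpow k⟩

theorem sr_notMem_of_odd_natCard {H : Subgroup (DihedralGroup n)} (hH : Odd (Nat.card H))
    (i : ZMod n) : sr i ∉ H := fun hi => by
  have h := orderOf_dvd_natCard (⟨sr i, hi⟩ : H)
  rw [Subgroup.orderOf_mk, orderOf_sr] at h
  exact Nat.not_even_iff_odd.mpr hH (even_iff_two_dvd.mpr h)

theorem isCyclic_of_odd_natCard {H : Subgroup (DihedralGroup n)} (hH : Odd (Nat.card H)) :
    IsCyclic H := by
  refine Subgroup.isCyclic_of_le (H' := Subgroup.zpowers (r 1)) ?_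
  rintro (i | i) hi
  · exact r_mem_zpowers_r_one i
  · exact absurd hi (sr_notMem_of_odd_natCard hH i)

end DihedralGroup

theorem dihedral_p_sq_conditions_not_pq_conditions (n : ℕ) (hn : 1 < n) (hodd : Odd n) :
    (∀ (H : Subgroup (DihedralGroup n)) (p : ℕ), p.Prime → Nat.card H = p ^ 2 → IsCyclic H) ∧
      ∃ (p q : ℕ) (H : Subgroup (DihedralGroup n)),
        p.Prime ∧ q.Prime ∧ Nat.card H = p * q ∧ ¬ IsCyclic H := by
  have : NeZero n := ⟨by omega⟩
  constructor
  · intro H p hp hcard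
    apply DihedralGroup.isCyclic_of_odd_natCard
    have hdvd : p ^ 2 ∣ 2 * n := by
      rw [← hcard, ← DihedralGroup.nat_card]
      exact H.card_subgroup_dvd_card
    rcases hp.eq_two_or_odd' with rfl | hp_odd
    · obtain ⟨k, rfl⟩ := hodd
      omega
    · exact hcard ▸ hp_odd.pow
  · obtain ⟨H, hcard, hH⟩ := DihedralGroup.exists_subgroup_natCard_eq_two_mul_not_isCyclic
      (Nat.minFac_prime hn.ne') (Nat.minFac_dvd n)
    exact ⟨2, n.minFac, H, Nat.prime_two, Nat.minFac_prime hn.ne', hcard, hH⟩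
end

section
/- Let p be an odd prime and let G be the semidirect product (ZMod p) ⋊ (ZMod 4) in which the generator 1 of ZMod 4 acts on ZMod p by negation. Then the order of every element of G belongs to the set {1, 2, 4, p, 2p}. -/
theorem zm_group_p_four_neg_one_orders (p : ℕ) (hp : p.Prime) (hodd : Odd p)
    (φ : Multiplicative (ZMod 4) →* MulAut (Multiplicative (ZMod p)))
    (hφ : ∀ x : Multiplicative (ZMod p),
      φ (Multiplicative.ofAdd (1 : ZMod 4)) x =
        Multiplicative.ofAdd (-(Multiplicative.toAdd x)))
    (g : Multiplicative (ZMod p) ⋊[φ] Multiplicative (ZMod 4)) :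
    orderOf g ∈ ({1, 2, 4, p, 2 * p} : Set ℕ) := by
  haveI : Fact p.Prime := ⟨hp⟩
  haveI : NeZero p := ⟨hp.ne_zero⟩
  have hφ1 : ∀ x : Multiplicative (ZMod p),
      φ (Multiplicative.ofAdd (1 : ZMod 4)) x = x⁻¹ := by
    intro x; rw [hφ]; rfl
  have hφ2 : ∀ x : Multiplicative (ZMod p),
      φ (Multiplicative.ofAdd (2 : ZMod 4)) x = x := by
    intro x
    have h : (2 : ZMod 4) = 1 + 1 := by decide
    rw [h, ofAdd_add, map_mul, MulAut.mul_apply, hφ1, hφ1, inv_inv]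
  have hφ3 : ∀ x : Multiplicative (ZMod p),
      φ (Multiplicative.ofAdd (3 : ZMod 4)) x = x⁻¹ := by
    intro x
    have h : (3 : ZMod 4) = 1 + 2 := by decide
    rw [h, ofAdd_add, map_mul, MulAut.mul_apply, hφ2, hφ1]
  have hcard : Fintype.card (Multiplicative (ZMod p)) = p :=
    (Fintype.card_multiplicative _).trans (ZMod.card p)
  have hap : ∀ a : Multiplicative (ZMod p), a ^ p = 1 := by
    intro a
    have h := pow_card_eq_one (G := Multiplicative (ZMod p)) (x := a)
    rwa [hcard] at h
  obtain ⟨a, b⟩ := g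
  have hb : Multiplicative.toAdd b = 0 ∨ Multiplicative.toAdd b = 1 ∨
      Multiplicative.toAdd b = 2 ∨ Multiplicative.toAdd b = 3 := by
    exact (by decide : ∀ x : ZMod 4, x = 0 ∨ x = 1 ∨ x = 2 ∨ x = 3) _
  have hbof : ∀ c : ZMod 4, Multiplicative.toAdd b = c → b = Multiplicative.ofAdd c := by
    intro c hc; rw [← hc]; rfl
  rcases hb with hb | hb | hb | hb
  all_goals rw [hbof _ hb]
  · -- b = 0 : g = inl a
    have heq : (⟨a, Multiplicative.ofAdd 0⟩ :
        Multiplicative (ZMod p) ⋊[φ] Multiplicative (ZMod 4)) =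
        SemidirectProduct.inl a := rfl
    rw [heq, orderOf_injective SemidirectProduct.inl SemidirectProduct.inl_injective]
    have hdvd : orderOf a ∣ p := by
      have h := orderOf_dvd_card (x := a)
      rwa [hcard] at h
    rcases (hp.eq_one_or_self_of_dvd _ hdvd) with h | h <;> simp [h]
  · -- b = 1
    have h2 : (⟨a, Multiplicative.ofAdd 1⟩ :
        Multiplicative (ZMod p) ⋊[φ] Multiplicative (ZMod 4)) ^ 2 =
        ⟨1, Multiplicative.ofAdd 2⟩ := by
      rw [sq]
      ext
      · simp [hφ1]
      · simp only [SemidirectProduct.mul_right, SemidirectProduct.right_inl, SemidirectProduct.one_right]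
        decide
    have h4 : (⟨a, Multiplicative.ofAdd 1⟩ :
        Multiplicative (ZMod p) ⋊[φ] Multiplicative (ZMod 4)) ^ 4 = 1 := by
      have h' : (⟨a, Multiplicative.ofAdd 1⟩ :
          Multiplicative (ZMod p) ⋊[φ] Multiplicative (ZMod 4)) ^ (2 * 2) = 1 := by
        rw [pow_mul, h2, sq]
        ext
        · simp
        · simp only [SemidirectProduct.mul_right, SemidirectProduct.right_inl, SemidirectProduct.one_right]
          decide
      rwa [(by norm_num : (2 : ℕ) * 2 = 4)] at h'
    have hd1 : orderOf (⟨a, Multiplicative.ofAdd 1⟩ :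
        Multiplicative (ZMod p) ⋊[φ] Multiplicative (ZMod 4)) ∣ 4 :=
      orderOf_dvd_of_pow_eq_one h4
    have hob : orderOf (Multiplicative.ofAdd (1 : ZMod 4)) = 4 := by
      rw [orderOf_eq_iff (by norm_num)]
      exact ⟨by decide, by decide⟩
    have hmap : orderOf (Multiplicative.ofAdd (1 : ZMod 4)) ∣
        orderOf (⟨a, Multiplicative.ofAdd 1⟩ :
          Multiplicative (ZMod p) ⋊[φ] Multiplicative (ZMod 4)) :=
      orderOf_map_dvd SemidirectProduct.rightHom _
    rw [hob] at hmap
    have h := Nat.dvd_antisymm hd1 hmap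
    simp only [Set.mem_insert_iff, Set.mem_singleton_iff]
    omega
  · -- b = 2
    have h2 : (⟨a, Multiplicative.ofAdd 2⟩ :
        Multiplicative (ZMod p) ⋊[φ] Multiplicative (ZMod 4)) ^ 2 =
        SemidirectProduct.inl (a * a) := by
      rw [sq]
      ext
      · simp [hφ2]
      · simp only [SemidirectProduct.mul_right, SemidirectProduct.right_inl, SemidirectProduct.one_right]
        decide
    have h2p : (⟨a, Multiplicative.ofAdd 2⟩ :
        Multiplicative (ZMod p) ⋊[φ] Multiplicative (ZMod 4)) ^ (2 * p) = 1 := by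
      rw [pow_mul, h2, ← map_pow]
      have h1 : (a * a) ^ p = 1 := by rw [mul_pow, hap, one_mul]
      rw [h1, map_one]
    have hdvd : orderOf (⟨a, Multiplicative.ofAdd 2⟩ :
        Multiplicative (ZMod p) ⋊[φ] Multiplicative (ZMod 4)) ∣ 2 * p :=
      orderOf_dvd_of_pow_eq_one h2p
    have hob : orderOf (Multiplicative.ofAdd (2 : ZMod 4)) = 2 := by
      rw [orderOf_eq_iff (by norm_num)]
      exact ⟨by decide, by decide⟩
    have hmap : orderOf (Multiplicative.ofAdd (2 : ZMod 4)) ∣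
        orderOf (⟨a, Multiplicative.ofAdd 2⟩ :
          Multiplicative (ZMod p) ⋊[φ] Multiplicative (ZMod 4)) :=
      orderOf_map_dvd SemidirectProduct.rightHom _
    rw [hob] at hmap
    obtain ⟨m, hm⟩ := hmap
    rw [hm] at hdvd
    have hmp : m ∣ p := (Nat.mul_dvd_mul_iff_left (by norm_num : 0 < 2)).mp hdvd
    rcases hp.eq_one_or_self_of_dvd _ hmp with h | h <;>
      · simp only [Set.mem_insert_iff, Set.mem_singleton_iff]
        omega
  · -- b = 3
    have h2 : (⟨a, Multiplicative.ofAdd 3⟩ :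
        Multiplicative (ZMod p) ⋊[φ] Multiplicative (ZMod 4)) ^ 2 =
        ⟨1, Multiplicative.ofAdd 2⟩ := by
      rw [sq]
      ext
      · simp [hφ3]
      · simp only [SemidirectProduct.mul_right, SemidirectProduct.right_inl, SemidirectProduct.one_right]
        decide
    have h4 : (⟨a, Multiplicative.ofAdd 3⟩ :
        Multiplicative (ZMod p) ⋊[φ] Multiplicative (ZMod 4)) ^ 4 = 1 := by
      have h' : (⟨a, Multiplicative.ofAdd 3⟩ :
          Multiplicative (ZMod p) ⋊[φ] Multiplicative (ZMod 4)) ^ (2 * 2) = 1 := by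
        rw [pow_mul, h2, sq]
        ext
        · simp
        · simp only [SemidirectProduct.mul_right, SemidirectProduct.right_inl, SemidirectProduct.one_right]
          decide
      rwa [(by norm_num : (2 : ℕ) * 2 = 4)] at h'
    have hd1 : orderOf (⟨a, Multiplicative.ofAdd 3⟩ :
        Multiplicative (ZMod p) ⋊[φ] Multiplicative (ZMod 4)) ∣ 4 :=
      orderOf_dvd_of_pow_eq_one h4
    have hob : orderOf (Multiplicative.ofAdd (3 : ZMod 4)) = 4 := by
      rw [orderOf_eq_iff (by norm_num)]
      exact ⟨by decide, by decide⟩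
    have hmap : orderOf (Multiplicative.ofAdd (3 : ZMod 4)) ∣
        orderOf (⟨a, Multiplicative.ofAdd 3⟩ :
          Multiplicative (ZMod p) ⋊[φ] Multiplicative (ZMod 4)) :=
      orderOf_map_dvd SemidirectProduct.rightHom _
    rw [hob] at hmap
    have h := Nat.dvd_antisymm hd1 hmap
    simp only [Set.mem_insert_iff, Set.mem_singleton_iff]
    omega
end

section
/- Let p and q be distinct odd primes, let r : (ZMod p)ˣ be a unit of multiplicative order q, and let G be the semidirect product (ZMod p) ⋊ (ZMod q²) in which the generator 1 of ZMod q² acts on ZMod p by multiplication by r. Then the order of every element of G belongs to the set {1, p, q, q², p·q}; in particular G has no element of order p·q². -/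
theorem zm_group_p_q_sq_orders (p q : ℕ) (hp : p.Prime) (hq : q.Prime)
    (hpo : Odd p) (hqo : Odd q) (hpq : p ≠ q)
    (r : (ZMod p)ˣ) (hr : orderOf r = q)
    (φ : Multiplicative (ZMod (q ^ 2)) →* MulAut (Multiplicative (ZMod p)))
    (hφ : ∀ x : Multiplicative (ZMod p),
      φ (Multiplicative.ofAdd (1 : ZMod (q ^ 2))) x =
        Multiplicative.ofAdd ((r : ZMod p) * Multiplicative.toAdd x)) :
    (∀ g : Multiplicative (ZMod p) ⋊[φ] Multiplicative (ZMod (q ^ 2)),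
      orderOf g ∈ ({1, p, q, q ^ 2, p * q} : Set ℕ)) ∧
      ∀ g : Multiplicative (ZMod p) ⋊[φ] Multiplicative (ZMod (q ^ 2)),
        orderOf g ≠ p * q ^ 2 := by
  haveI : NeZero (q ^ 2) := ⟨pow_ne_zero 2 hq.ne_zero⟩
  haveI : Fact p.Prime := ⟨hp⟩
  have hq1 : r ^ q = 1 := by rw [← hr]; exact pow_orderOf_eq_one r
  have K1 : ∀ (k : ℕ) (x : Multiplicative (ZMod p)),
      φ (Multiplicative.ofAdd ((k : ZMod (q ^ 2)))) x =
        Multiplicative.ofAdd (((r : ZMod p)) ^ k * Multiplicative.toAdd x) := by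
    intro k
    induction k with
    | zero => intro x; simp
    | succ k ih =>
      intro x
      have h1 : ((k + 1 : ℕ) : ZMod (q ^ 2)) = (k : ZMod (q ^ 2)) + 1 := by push_cast; ring
      rw [h1, ofAdd_add, map_mul, MulAut.mul_apply, hφ, ih]
      congr 1
      simp only [toAdd_ofAdd]
      rw [pow_succ]
      ring
  have key : ∀ g : Multiplicative (ZMod p) ⋊[φ] Multiplicative (ZMod (q ^ 2)),
      orderOf g ∣ p * q ∨ orderOf g ∣ q ^ 2 := by
    intro g
    set a := Multiplicative.toAdd g.left with ha
    set m := (Multiplicative.toAdd g.right).val with hm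
    have hgl : g.left = Multiplicative.ofAdd a := rfl
    have hgr : g.right = Multiplicative.ofAdd ((m : ZMod (q ^ 2))) := by
      rw [hm, ZMod.natCast_val, ZMod.cast_id, ofAdd_toAdd]
    clear_value a m
    have hpow : ∀ n : ℕ, g ^ n =
        ⟨Multiplicative.ofAdd ((∑ j ∈ Finset.range n, (r : ZMod p) ^ (j * m)) * a),
          Multiplicative.ofAdd (((n * m : ℕ) : ZMod (q ^ 2)))⟩ := by
      intro n
      induction n with
      | zero =>
        apply SemidirectProduct.ext <;> simp
      | succ n ih =>
        have hstep : g ^ (n + 1) = g ^ n * g := pow_succ g n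
        rw [hstep, ih]
        apply SemidirectProduct.ext
        · rw [SemidirectProduct.mul_left]
          dsimp only
          rw [K1, ← ha, ← ofAdd_add]
          congr 1
          rw [Finset.sum_range_succ]
          ring
        · rw [SemidirectProduct.mul_right]
          dsimp only
          rw [hgr, ← ofAdd_add]
          congr 1
          push_cast
          ring
    by_cases hqm : q ∣ m
    · left
      apply orderOf_dvd_of_pow_eq_one
      rw [hpow (p * q)]
      apply SemidirectProduct.ext
      · dsimp only
        rw [SemidirectProduct.one_left]
        have hone : ∀ j, (r : ZMod p) ^ (j * m) = 1 := by
          intro j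
          obtain ⟨c, rfl⟩ := hqm
          have h2 : r ^ (j * (q * c)) = 1 := by
            rw [show j * (q * c) = q * (j * c) by ring, pow_mul, hq1, one_pow]
          rw [← Units.val_pow_eq_pow_val, h2, Units.val_one]
        have hsum : (∑ j ∈ Finset.range (p * q), (r : ZMod p) ^ (j * m)) = 0 := by
          rw [Finset.sum_congr rfl (fun j _ => hone j), Finset.sum_const,
            Finset.card_range, nsmul_eq_mul, mul_one]
          push_cast
          simp [ZMod.natCast_self]
        rw [hsum, zero_mul, ofAdd_zero]
      · dsimp only
        rw [SemidirectProduct.one_right]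
        have : ((p * q * m : ℕ) : ZMod (q ^ 2)) = 0 := by
          obtain ⟨c, rfl⟩ := hqm
          rw [show p * q * (q * c) = (q ^ 2) * (p * c) by ring, Nat.cast_mul,
            ZMod.natCast_self, zero_mul]
        rw [this, ofAdd_zero]
    · right
      apply orderOf_dvd_of_pow_eq_one
      rw [hpow (q ^ 2)]
      apply SemidirectProduct.ext
      · dsimp only
        rw [SemidirectProduct.one_left]
        set s : ZMod p := (r : ZMod p) ^ m with hs
        have hrw : ∀ j, (r : ZMod p) ^ (j * m) = s ^ j := by
          intro j; rw [hs, ← pow_mul, mul_comm]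
        have hs1 : s ≠ 1 := by
          intro h
          have : r ^ m = 1 := by
            apply Units.ext
            rw [Units.val_pow_eq_pow_val, Units.val_one]
            exact h
          have : q ∣ m := hr ▸ orderOf_dvd_of_pow_eq_one this
          exact hqm this
        have hsq : s ^ (q ^ 2) = 1 := by
          rw [hs, ← pow_mul, show m * q ^ 2 = q * (m * q) by ring,
            pow_mul, ← Units.val_pow_eq_pow_val, hq1, Units.val_one, one_pow]
        have hsum : (∑ j ∈ Finset.range (q ^ 2), (r : ZMod p) ^ (j * m)) = 0 := by
          rw [Finset.sum_congr rfl (fun j _ => hrw j), geom_sum_eq hs1, hsq]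
          simp
        rw [hsum, zero_mul, ofAdd_zero]
      · dsimp only
        rw [SemidirectProduct.one_right]
        have : ((q ^ 2 * m : ℕ) : ZMod (q ^ 2)) = 0 := by
          rw [Nat.cast_mul, ZMod.natCast_self, zero_mul]
        rw [this, ofAdd_zero]
  have hdiv : ∀ n : ℕ, n ∣ p * q → n = 1 ∨ n = p ∨ n = q ∨ n = p * q := by
    intro n hn
    by_cases hpn : p ∣ n
    · obtain ⟨e, rfl⟩ := hpn
      have he : e ∣ q := (mul_dvd_mul_iff_left (a := p) (by exact_mod_cast hp.pos.ne')).mp hn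
      rcases (Nat.Prime.eq_one_or_self_of_dvd hq e he) with h | h
      · right; left; rw [h, mul_one]
      · right; right; right; rw [h]
    · have hcop : Nat.Coprime n p := (hp.coprime_iff_not_dvd.mpr hpn).symm
      have : n ∣ q := hcop.dvd_of_dvd_mul_left hn
      rcases (Nat.Prime.eq_one_or_self_of_dvd hq n this) with h | h
      · left; exact h
      · right; right; left; exact h
  have main : ∀ g : Multiplicative (ZMod p) ⋊[φ] Multiplicative (ZMod (q ^ 2)),
      orderOf g ∈ ({1, p, q, q ^ 2, p * q} : Set ℕ) := by
    intro g
    rcases key g with h | h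
    · rcases hdiv _ h with h1 | h1 | h1 | h1 <;> simp [h1]
    · obtain ⟨i, hi, h1⟩ := (Nat.dvd_prime_pow hq).mp h
      interval_cases i <;> simp_all
  refine ⟨main, ?_⟩
  intro g hcon
  have hp2 := hp.two_le
  have hq2 := hq.two_le
  rcases key g with h | h <;> rw [hcon] at h
  · have := Nat.le_of_dvd (by positivity) h
    nlinarith
  · have := Nat.le_of_dvd (by positivity) h
    nlinarith
end

section
/- Let n ≥ 4 and let r₂, r₃, …, r_{n-1} be natural numbers with r₂ ≥ 2. If Σ_{j=2}^{n-1} r_j · (2^(n-1) − 2^(n-j)) = 2^n − 2, then r₂ = 2, r_j = 0 for all 3 ≤ j ≤ n−2, and r_{n-1} = 1. -/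
theorem quaternion_signature_equation (n : ℕ) (hn : 4 ≤ n) (r : ℕ → ℕ) (hr2 : 2 ≤ r 2)
    (h : ∑ j ∈ Finset.Icc 2 (n - 1), r j * (2 ^ (n - 1) - 2 ^ (n - j)) = 2 ^ n - 2) :
    r 2 = 2 ∧ (∀ j, 3 ≤ j → j ≤ n - 2 → r j = 0) ∧ r (n - 1) = 1 := by
  obtain ⟨Q, hQ⟩ : ∃ Q, (2:ℕ) ^ (n - 4) = Q := ⟨_, rfl⟩
  have hQ1 : 1 ≤ Q := hQ ▸ Nat.one_le_two_pow
  have e2 : (2:ℕ) ^ (n - 2) = 4 * Q := by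
    have h' : (2:ℕ) ^ (n - 2) = 2 ^ ((n - 4) + 2) := by congr 1; omega
    rw [h', pow_add, hQ]; ring
  have e1 : (2:ℕ) ^ (n - 1) = 8 * Q := by
    have h' : (2:ℕ) ^ (n - 1) = 2 ^ ((n - 4) + 3) := by congr 1; omega
    rw [h', pow_add, hQ]; ring
  have e0 : (2:ℕ) ^ n = 16 * Q := by
    have h' : (2:ℕ) ^ n = 2 ^ ((n - 4) + 4) := by congr 1; omega
    rw [h', pow_add, hQ]; ring
  have hsplit : Finset.Icc 2 (n - 1) = insert 2 (insert (n - 1) (Finset.Icc 3 (n - 2))) := by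
    ext j
    simp only [Finset.mem_Icc, Finset.mem_insert]
    omega
  rw [hsplit, Finset.sum_insert (by simp only [Finset.mem_insert, Finset.mem_Icc]; omega),
    Finset.sum_insert (by simp only [Finset.mem_Icc]; omega)] at h
  have w2 : (2:ℕ) ^ (n - 1) - 2 ^ (n - 2) = 4 * Q := by rw [e1, e2]; omega
  have wn : (2:ℕ) ^ (n - 1) - 2 ^ (n - (n - 1)) = 8 * Q - 2 := by
    have h' : n - (n - 1) = 1 := by omega
    rw [h', pow_one, e1]
  rw [w2, wn, e0] at h
  -- the middle sum is divisible by 4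
  obtain ⟨k, hk⟩ : 4 ∣ ∑ j ∈ Finset.Icc 3 (n - 2), r j * (2 ^ (n - 1) - 2 ^ (n - j)) := by
    refine Finset.dvd_sum fun j hj => Dvd.dvd.mul_left ?_ _
    simp only [Finset.mem_Icc] at hj
    have h4 : (4:ℕ) = 2 ^ 2 := by norm_num
    rw [h4]
    exact Nat.dvd_sub (pow_dvd_pow 2 (by omega)) (pow_dvd_pow 2 (by omega))
  rw [hk] at h
  -- bound r (n-1)
  have hA : 2 * (4 * Q) ≤ r 2 * (4 * Q) := Nat.mul_le_mul_right _ hr2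
  have hupper : r 2 * (4 * Q) + r (n - 1) * (8 * Q - 2) ≤ 16 * Q - 2 := by
    calc r 2 * (4 * Q) + r (n - 1) * (8 * Q - 2)
        ≤ r 2 * (4 * Q) + (r (n - 1) * (8 * Q - 2) + 4 * k) :=
          Nat.add_le_add_left (Nat.le_add_right _ _) _
      _ = 16 * Q - 2 := h
  have hB1 : r (n - 1) ≤ 1 := by
    by_contra hB
    push_neg at hB
    have h2 : 2 * (8 * Q - 2) ≤ r (n - 1) * (8 * Q - 2) := Nat.mul_le_mul_right _ hB
    have hcomb : 2 * (4 * Q) + 2 * (8 * Q - 2) ≤ 16 * Q - 2 :=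
      le_trans (Nat.add_le_add hA h2) hupper
    omega
  have hB01 : r (n - 1) = 0 ∨ r (n - 1) = 1 := by omega
  rcases hB01 with hb | hb
  · -- impossible by mod 4
    exfalso
    have hA' : r 2 * (4 * Q) = (r 2 * Q) * 4 := by ring
    rw [hb, zero_mul, hA'] at h
    obtain ⟨M, hM⟩ : ∃ M, r 2 * Q = M := ⟨_, rfl⟩
    rw [hM] at h
    omega
  · have hA' : r 2 * (4 * Q) = (r 2 * Q) * 4 := by ring
    rw [hb, one_mul, hA'] at h
    obtain ⟨M, hM⟩ : ∃ M, r 2 * Q = M := ⟨_, rfl⟩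
    rw [hM] at h
    have hAM : 2 * Q ≤ M := hM ▸ Nat.mul_le_mul_right _ hr2
    have hMk : M = 2 * Q ∧ k = 0 := by omega
    have hr2eq : r 2 = 2 := by
      have hmm : r 2 * Q = 2 * Q := hM.trans hMk.1
      exact Nat.eq_of_mul_eq_mul_right (by omega) hmm
    have hS0 : ∀ j ∈ Finset.Icc 3 (n - 2), r j * (2 ^ (n - 1) - 2 ^ (n - j)) = 0 := by
      rw [← Finset.sum_eq_zero_iff, hk, hMk.2]; rfl
    refine ⟨hr2eq, fun j h3 h4 => ?_, hb⟩
    have hj := hS0 j (Finset.mem_Icc.mpr ⟨h3, h4⟩)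
    have hw : 0 < 2 ^ (n - 1) - 2 ^ (n - j) := by
      have : (2:ℕ) ^ (n - j) < 2 ^ (n - 1) :=
        Nat.pow_lt_pow_right (by norm_num) (by omega)
      omega
    rcases Nat.mul_eq_zero.mp hj with h0 | h0
    · exact h0
    · omega
end

section
/- Let p ≥ 2, let e ≥ 2, and let r₁, r₂, …, r_e be natural numbers with r_e ≥ 2. If Σ_{j=1}^{e} r_j · p^(e-j) · (p^(j-1) − 1) = 2·p^(e-1) − 2, then r_j = 0 for all 2 ≤ j ≤ e−1 and r_e = 2 (while r₁ is arbitrary). -/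
/-!
Only the top term `j = e` of the sum can be large: it equals `r e * (p ^ (e - 1) - 1)`, which by
`r e ≥ 2` already reaches the right-hand side `2 * (p ^ (e - 1) - 1)`. Hence `r e = 2` and all other
terms vanish; for `2 ≤ j < e` the coefficient `p ^ (e - j) * (p ^ (j - 1) - 1)` is positive, so
`r j = 0`, whereas for `j = 1` it is zero and `r 1` is unconstrained.
-/

lemma eq_zero_and_eq_two_of_add_mul_eq_two_mul {a b c : ℕ} (hc : 0 < c) (hb : 2 ≤ b)
    (h : a + b * c = 2 * c) : a = 0 ∧ b = 2 := by
  have hbc : 2 * c ≤ b * c := Nat.mul_le_mul_right c hb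
  have ha : a = 0 := by omega
  exact ⟨ha, Nat.eq_of_mul_eq_mul_right hc (by omega)⟩

lemma eq_zero_of_sum_mul_eq_zero {ι : Type*} {s : Finset ι} {r c : ι → ℕ}
    (h : ∑ j ∈ s, r j * c j = 0) {j : ι} (hj : j ∈ s) (hc : 0 < c j) : r j = 0 :=
  (Nat.mul_eq_zero.mp (Finset.sum_eq_zero_iff.mp h j hj)).resolve_right hc.ne'

lemma pow_sub_mul_pow_pred_sub_one_pos {p : ℕ} (hp : 2 ≤ p) (n : ℕ) {j : ℕ} (hj : 2 ≤ j) :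
    0 < p ^ (n - j) * (p ^ (j - 1) - 1) :=
  Nat.mul_pos (Nat.pow_pos (by omega)) (Nat.sub_pos_of_lt (Nat.one_lt_pow (by omega) hp))

theorem cyclic_signature_equation (p e : ℕ) (hp : 2 ≤ p) (he : 2 ≤ e)
    (r : ℕ → ℕ) (hre : 2 ≤ r e)
    (h : ∑ j ∈ Finset.Icc 1 e, r j * p ^ (e - j) * (p ^ (j - 1) - 1) = 2 * p ^ (e - 1) - 2) :
    (∀ j, 2 ≤ j → j ≤ e - 1 → r j = 0) ∧ r e = 2 := by
  obtain ⟨n, rfl⟩ : ∃ n, e = n + 1 := ⟨e - 1, by omega⟩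
  simp only [Finset.sum_Icc_succ_top (by omega : 1 ≤ n + 1), Nat.sub_self, pow_zero, one_mul,
    Nat.add_sub_cancel, mul_assoc] at h ⊢
  rw [← Nat.mul_sub_one] at h
  have htop : 0 < p ^ n - 1 := Nat.sub_pos_of_lt (Nat.one_lt_pow (by omega) hp)
  obtain ⟨hrest, hr⟩ := eq_zero_and_eq_two_of_add_mul_eq_two_mul htop hre h
  refine ⟨fun j hj hjn => ?_, hr⟩
  exact eq_zero_of_sum_mul_eq_zero hrest (Finset.mem_Icc.mpr ⟨by omega, hjn⟩)
    (pow_sub_mul_pow_pred_sub_one_pos hp (n + 1) hj)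
end

section
/- Let p and q be distinct odd primes. Then there do not exist natural numbers r, s, u and t with t ≥ 2 such that, as integers, (t−2)·p·q² + (r+s+u)·p·q² − r·q² − s·p·q − t·p − u·q = (p−1)·(q−1) − 2. -/
private lemma zm_aux1 (a b : ℤ) (ha : 3 ≤ a) (hb : 3 ≤ b) :
    (a - 1) * (b + 1) < a * (b ^ 2 - 1) := by
  nlinarith [mul_pos (by linarith : (0:ℤ) < a) (by linarith : (0:ℤ) < b),
    mul_pos (by linarith : (0:ℤ) < a - 1) (by linarith : (0:ℤ) < b - 1),
    mul_pos (by linarith : (0:ℤ) < a - 1) (by linarith : (0:ℤ) < b + 1),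
    mul_pos (by linarith : (0:ℤ) < a) (by linarith : (0:ℤ) < b - 1),
    mul_pos (by linarith : (0:ℤ) < a) (by linarith : (0:ℤ) < b + 1)]

private lemma zm_aux2 (a b : ℤ) (ha : 3 ≤ a) (hb : 3 ≤ b) :
    (a - 1) * (b + 1) < b ^ 2 * (a - 1) := by
  nlinarith [mul_pos (by linarith : (0:ℤ) < a) (by linarith : (0:ℤ) < b),
    mul_pos (by linarith : (0:ℤ) < a - 1) (by linarith : (0:ℤ) < b - 1),
    mul_pos (by linarith : (0:ℤ) < a - 1) (by linarith : (0:ℤ) < b + 1),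
    mul_pos (by linarith : (0:ℤ) < a) (by linarith : (0:ℤ) < b - 1),
    mul_pos (by linarith : (0:ℤ) < a) (by linarith : (0:ℤ) < b + 1)]

private lemma zm_aux3 (a b : ℤ) (ha : 3 ≤ a) (hb : 3 ≤ b) :
    (a - 1) * (b + 1) < a * b * (b - 1) := by
  nlinarith [mul_pos (by linarith : (0:ℤ) < a) (by linarith : (0:ℤ) < b),
    mul_pos (by linarith : (0:ℤ) < a - 1) (by linarith : (0:ℤ) < b - 1),
    mul_pos (by linarith : (0:ℤ) < a - 1) (by linarith : (0:ℤ) < b + 1),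
    mul_pos (by linarith : (0:ℤ) < a) (by linarith : (0:ℤ) < b - 1),
    mul_pos (by linarith : (0:ℤ) < a) (by linarith : (0:ℤ) < b + 1)]

private lemma zm_aux4 (a b : ℤ) (ha : 3 ≤ a) (hb : 3 ≤ b) :
    (a - 1) * (b + 1) < b * (a * b - 1) := by
  nlinarith [mul_pos (by linarith : (0:ℤ) < a) (by linarith : (0:ℤ) < b),
    mul_pos (by linarith : (0:ℤ) < a - 1) (by linarith : (0:ℤ) < b - 1),
    mul_pos (by linarith : (0:ℤ) < a - 1) (by linarith : (0:ℤ) < b + 1),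
    mul_pos (by linarith : (0:ℤ) < a) (by linarith : (0:ℤ) < b - 1),
    mul_pos (by linarith : (0:ℤ) < a) (by linarith : (0:ℤ) < b + 1)]

theorem zm_riemann_hurwitz_case_half (p q : ℕ) (hp : p.Prime) (hq : q.Prime)
    (hpo : Odd p) (hqo : Odd q) (hpq : p ≠ q) :
    ¬ ∃ r s u t : ℕ, 2 ≤ t ∧
      ((t : ℤ) - 2) * p * q ^ 2 + ((r : ℤ) + s + u) * p * q ^ 2
          - r * q ^ 2 - s * p * q - t * p - u * q
        = ((p : ℤ) - 1) * ((q : ℤ) - 1) - 2 := by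
  rintro ⟨r, s, u, t, ht, heq⟩
  have hp3 : (3 : ℤ) ≤ p := by
    have := hp.two_le
    rcases hpo with ⟨k, hk⟩
    omega
  have hq3 : (3 : ℤ) ≤ q := by
    have := hq.two_le
    rcases hqo with ⟨k, hk⟩
    omega
  have ht2 : (2 : ℤ) ≤ t := by exact_mod_cast ht
  have hr : (0 : ℤ) ≤ r := Int.ofNat_nonneg r
  have hs : (0 : ℤ) ≤ s := Int.ofNat_nonneg s
  have hu : (0 : ℤ) ≤ u := Int.ofNat_nonneg u
  have key : ((t:ℤ) - 2) * ((p:ℤ) * ((q:ℤ)^2 - 1)) + (r:ℤ) * ((q:ℤ)^2 * ((p:ℤ) - 1))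
      + (s:ℤ) * ((p:ℤ) * (q:ℤ) * ((q:ℤ) - 1)) + (u:ℤ) * ((q:ℤ) * ((p:ℤ) * (q:ℤ) - 1))
      = ((p:ℤ) - 1) * ((q:ℤ) + 1) := by linear_combination heq
  have hq2 : (9:ℤ) ≤ (q:ℤ)^2 := by nlinarith
  have hpq1 : (9:ℤ) ≤ (p:ℤ) * q := by nlinarith
  have c1 : (0:ℤ) < (p:ℤ) * ((q:ℤ)^2 - 1) := mul_pos (by linarith) (by linarith)
  have c2 : (0:ℤ) < (q:ℤ)^2 * ((p:ℤ) - 1) := mul_pos (by linarith) (by linarith)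
  have c3 : (0:ℤ) < (p:ℤ) * (q:ℤ) * ((q:ℤ) - 1) := mul_pos (by positivity) (by linarith)
  have c4 : (0:ℤ) < (q:ℤ) * ((p:ℤ) * (q:ℤ) - 1) := mul_pos (by linarith) (by linarith)
  have n1 := mul_nonneg (by linarith : (0:ℤ) ≤ (t:ℤ) - 2) c1.le
  have n2 := mul_nonneg hr c2.le
  have n3 := mul_nonneg hs c3.le
  have n4 := mul_nonneg hu c4.le
  have htt : (t:ℤ) = 2 := by
    by_contra h
    have h3 : (1:ℤ) ≤ (t:ℤ) - 2 := by omega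
    have hge := le_mul_of_one_le_left c1.le h3
    have := zm_aux1 (p:ℤ) (q:ℤ) hp3 hq3
    linarith
  have hrr : (r:ℤ) = 0 := by
    by_contra h
    have h1 : (1:ℤ) ≤ r := by omega
    have hge := le_mul_of_one_le_left c2.le h1
    have := zm_aux2 (p:ℤ) (q:ℤ) hp3 hq3
    linarith
  have hss : (s:ℤ) = 0 := by
    by_contra h
    have h1 : (1:ℤ) ≤ s := by omega
    have hge := le_mul_of_one_le_left c3.le h1
    have := zm_aux3 (p:ℤ) (q:ℤ) hp3 hq3
    linarith
  have huu : (u:ℤ) = 0 := by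
    by_contra h
    have h1 : (1:ℤ) ≤ u := by omega
    have hge := le_mul_of_one_le_left c4.le h1
    have := zm_aux4 (p:ℤ) (q:ℤ) hp3 hq3
    linarith
  rw [htt, hrr, hss, huu] at key
  have cpos : (0:ℤ) < ((p:ℤ) - 1) * ((q:ℤ) + 1) := mul_pos (by linarith) (by linarith)
  simp at key
  rcases key with h | h <;> linarith
end

section
/- Let p and q be distinct odd primes. Then there do not exist natural numbers r, s, u and t with t ≥ 2 such that, as integers, (t−2)·p·q² + (r+s+u)·p·q² − r·q² − s·p·q − t·p − u·q = 2·(p−1)·(q−1) − 2. -/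
theorem zm_riemann_hurwitz_case_full (p q : ℕ) (hp : p.Prime) (hq : q.Prime)
    (hpo : Odd p) (hqo : Odd q) (hpq : p ≠ q) :
    ¬ ∃ r s u t : ℕ, 2 ≤ t ∧
      ((t : ℤ) - 2) * p * q ^ 2 + ((r : ℤ) + s + u) * p * q ^ 2
          - r * q ^ 2 - s * p * q - t * p - u * q
        = 2 * ((p : ℤ) - 1) * ((q : ℤ) - 1) - 2 := by
  rintro ⟨r, s, u, t, ht, heq⟩
  have hp3 : 3 ≤ (p : ℤ) := by
    have := hp.two_le
    rcases hpo with ⟨k, hk⟩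
    omega
  have hq3 : 3 ≤ (q : ℤ) := by
    have := hq.two_le
    rcases hqo with ⟨k, hk⟩
    omega
  set P : ℤ := (p : ℤ)
  set Q : ℤ := (q : ℤ)
  have ht2 : (2 : ℤ) ≤ (t : ℤ) := by exact_mod_cast ht
  have hr0 : (0 : ℤ) ≤ (r : ℤ) := Int.natCast_nonneg r
  have hs0 : (0 : ℤ) ≤ (s : ℤ) := Int.natCast_nonneg s
  have hu0 : (0 : ℤ) ≤ (u : ℤ) := Int.natCast_nonneg u
  have key : ((t : ℤ) - 2) * (P * (Q ^ 2 - 1)) + (r : ℤ) * (Q ^ 2 * (P - 1))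
      + (s : ℤ) * (P * Q * (Q - 1)) + (u : ℤ) * (Q * (P * Q - 1))
      = 2 * Q * (P - 1) := by linear_combination heq
  have c1 : (0 : ℤ) ≤ P * (Q ^ 2 - 1) - 2 * Q * (P - 1) - 1 := by
    nlinarith [mul_nonneg (show (0:ℤ) ≤ P - 3 by linarith) (show (0:ℤ) ≤ (Q-1)^2 - 4 by nlinarith [sq_nonneg (Q-3)]), sq_nonneg (Q-3)]
  have c2 : (0 : ℤ) ≤ Q ^ 2 * (P - 1) - 2 * Q * (P - 1) - 1 := by
    nlinarith [mul_nonneg (mul_nonneg (show (0:ℤ) ≤ Q - 3 by linarith) (show (0:ℤ) ≤ P - 1 by linarith)) (show (0:ℤ) ≤ Q - 2 by linarith), mul_nonneg (show (0:ℤ) ≤ P - 3 by linarith) (show (0:ℤ) ≤ Q - 3 by linarith)]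
  have c3 : (0 : ℤ) ≤ P * Q * (Q - 1) - 2 * Q * (P - 1) - 1 := by
    nlinarith [mul_nonneg (mul_nonneg (show (0:ℤ) ≤ P - 3 by linarith) (show (0:ℤ) ≤ Q by linarith)) (show (0:ℤ) ≤ Q - 3 by linarith), mul_nonneg (show (0:ℤ) ≤ P - 3 by linarith) (show (0:ℤ) ≤ Q - 3 by linarith)]
  have c4 : (0 : ℤ) ≤ Q * (P * Q - 1) - 2 * Q * (P - 1) - 1 := by
    nlinarith [mul_nonneg (mul_nonneg (show (0:ℤ) ≤ P - 3 by linarith) (show (0:ℤ) ≤ Q by linarith)) (show (0:ℤ) ≤ Q - 3 by linarith), mul_nonneg (show (0:ℤ) ≤ P - 3 by linarith) (show (0:ℤ) ≤ Q - 3 by linarith)]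
  have hM : (0:ℤ) < 2 * Q * (P - 1) := by nlinarith
  have d1 : (0:ℤ) ≤ P * (Q ^ 2 - 1) := by linarith
  have d2 : (0:ℤ) ≤ Q ^ 2 * (P - 1) := by linarith
  have d3 : (0:ℤ) ≤ P * Q * (Q - 1) := by linarith
  have d4 : (0:ℤ) ≤ Q * (P * Q - 1) := by linarith
  have hcase : 1 ≤ r ∨ 1 ≤ s ∨ 1 ≤ u ∨ 3 ≤ t ∨ (r = 0 ∧ s = 0 ∧ u = 0 ∧ t = 2) := by omega
  have ht0 : (0:ℤ) ≤ (t:ℤ) - 2 := by linarith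
  rcases hcase with h | h | h | h | ⟨h1, h2, h3, h4⟩
  · have hr1 : (0:ℤ) ≤ (r:ℤ) - 1 := by
      have : (1:ℤ) ≤ (r:ℤ) := by exact_mod_cast h
      linarith
    linarith [mul_nonneg hr1 d2, mul_nonneg ht0 d1, mul_nonneg hs0 d3, mul_nonneg hu0 d4, c2, hM]
  · have hs1 : (0:ℤ) ≤ (s:ℤ) - 1 := by
      have : (1:ℤ) ≤ (s:ℤ) := by exact_mod_cast h
      linarith
    linarith [mul_nonneg hs1 d3, mul_nonneg ht0 d1, mul_nonneg hr0 d2, mul_nonneg hu0 d4, c3, hM]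
  · have hu1 : (0:ℤ) ≤ (u:ℤ) - 1 := by
      have : (1:ℤ) ≤ (u:ℤ) := by exact_mod_cast h
      linarith
    linarith [mul_nonneg hu1 d4, mul_nonneg ht0 d1, mul_nonneg hr0 d2, mul_nonneg hs0 d3, c4, hM]
  · have ht1 : (0:ℤ) ≤ (t:ℤ) - 3 := by
      have : (3:ℤ) ≤ (t:ℤ) := by exact_mod_cast h
      linarith
    linarith [mul_nonneg ht1 d1, mul_nonneg hr0 d2, mul_nonneg hs0 d3, mul_nonneg hu0 d4, c1, hM]
  · subst h1; subst h2; subst h3; subst h4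
    simp at key
    rcases key with h | h <;> linarith
end

section
/- Let p be an odd prime and let r, s, t, u be natural numbers satisfying, as integers, both 2pr + 3ps + 4t(p−1) + 2u(2p−1) − 8p = 2pr + ps + 2u − 4 and 2pr + 3ps + 4t(p−1) + 2u(2p−1) − 8p = (4t + 2u)(p−1) − 2p. Then r = 0, s = 2, t = 1 and u = 0. -/
theorem zm_p_four_signature_equations (p : ℕ) (hp : p.Prime) (hodd : Odd p)
    (r s t u : ℕ)
    (h1 : 2 * (p : ℤ) * r + 3 * p * s + 4 * t * (p - 1) + 2 * u * (2 * p - 1) - 8 * p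
        = 2 * p * r + p * s + 2 * u - 4)
    (h2 : 2 * (p : ℤ) * r + 3 * p * s + 4 * t * (p - 1) + 2 * u * (2 * p - 1) - 8 * p
        = (4 * t + 2 * u) * (p - 1) - 2 * p) :
    r = 0 ∧ s = 2 ∧ t = 1 ∧ u = 0 := by
  have hp2 := hp.two_le
  have hne2 : p ≠ 2 := by rintro rfl; exact (by decide : ¬ Odd 2) hodd
  have hp3 : 3 ≤ p := by omega
  have hP3 : (3 : ℤ) ≤ (p : ℤ) := by exact_mod_cast hp3
  have hPne : (p : ℤ) ≠ 0 := by positivity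
  -- From h2: 2r + 3s + 2u = 6
  have hmul : (p : ℤ) * (2 * r + 3 * s + 2 * u) = (p : ℤ) * 6 := by linear_combination h2
  have h6z : (2 * r + 3 * s + 2 * u : ℤ) = 6 := mul_left_cancel₀ hPne hmul
  have h6 : 2 * r + 3 * s + 2 * u = 6 := by exact_mod_cast h6z
  -- From h1: 2ps + 4(t+u)(p-1) = 8p - 4
  have heq1 : 2 * (p : ℤ) * s + 4 * ((t : ℤ) + u) * ((p : ℤ) - 1) = 8 * p - 4 := by
    linear_combination h1
  have hs2 : s ≤ 2 := by omega
  interval_cases s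
  · -- s = 0 : (t+u)(p-1) = 2p-1, impossible
    exfalso
    have hk4 : (4 : ℤ) * (((t : ℤ) + u) * ((p : ℤ) - 1)) = 4 * (2 * p - 1) := by
      linear_combination heq1
    have hk : ((t : ℤ) + u) * ((p : ℤ) - 1) = 2 * p - 1 :=
      mul_left_cancel₀ (by norm_num) hk4
    rcases le_or_gt ((t : ℤ) + u) 2 with h | h
    · nlinarith [mul_le_mul_of_nonneg_right h (by linarith : (0:ℤ) ≤ (p : ℤ) - 1)]
    · have h3 : (3 : ℤ) ≤ (t : ℤ) + u := h
      nlinarith [mul_le_mul_of_nonneg_right h3 (by linarith : (0:ℤ) ≤ (p : ℤ) - 1)]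
  · -- s = 1 : parity contradiction
    exfalso
    obtain ⟨k, hkk⟩ := hodd
    have hkz : (p : ℤ) = 2 * k + 1 := by exact_mod_cast hkk
    have hm : 4 * (((t : ℤ) + u) * ((p : ℤ) - 1)) = 6 * p - 4 := by linear_combination heq1
    rw [hkz] at hm
    set m : ℤ := ((t : ℤ) + u) * (2 * (k : ℤ) + 1 - 1) with hmdef
    omega
  · -- s = 2 : t + u = 1
    have hk4 : (4 : ℤ) * (((t : ℤ) + u) * ((p : ℤ) - 1)) = 4 * (1 * ((p : ℤ) - 1)) := by
      linear_combination heq1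
    have hk : ((t : ℤ) + u) * ((p : ℤ) - 1) = 1 * ((p : ℤ) - 1) :=
      mul_left_cancel₀ (by norm_num) hk4
    have hne : (p : ℤ) - 1 ≠ 0 := by linarith
    have htu : ((t : ℤ) + u) = 1 := mul_right_cancel₀ hne hk
    have htu' : t + u = 1 := by exact_mod_cast htu
    omega
end

section
/- Let G be a group and let A, B, R ∈ G satisfy B⁴ = 1, B·A·B⁻¹ = A⁻¹, R² = B², R·A·R⁻¹ = A⁻¹ and R·B·R⁻¹ = B⁻¹. Then (R·A·B)⁴ = A⁻⁴. In particular, if A has odd order m then (R·A·B)⁴ has order m. -/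
theorem type_two_group_RAB_pow_four (G : Type*) [Group G] (A B R : G)
    (hB : B ^ 4 = 1) (hBA : B * A * B⁻¹ = A⁻¹) (hR : R ^ 2 = B ^ 2)
    (hRA : R * A * R⁻¹ = A⁻¹) (hRB : R * B * R⁻¹ = B⁻¹) :
    (R * A * B) ^ 4 = (A ^ 4)⁻¹ ∧
      ∀ m : ℕ, Odd m → orderOf A = m → orderOf ((R * A * B) ^ 4) = m := by
  have iA := congrArg (·⁻¹) hRA
  simp only [mul_inv_rev, inv_inv] at iA
  have iB := congrArg (·⁻¹) hRB
  simp only [mul_inv_rev, inv_inv] at iB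
  have iBA := congrArg (·⁻¹) hBA
  simp only [mul_inv_rev, inv_inv] at iBA
  have h1 : R * A = A⁻¹ * R := by rw [← hRA]; group
  have h2 : R * B = B⁻¹ * R := by rw [← hRB]; group
  have h3 : B * A = A⁻¹ * B := by rw [← hBA]; group
  have h1' : R * A⁻¹ = A * R := by (conv_rhs => rw [← iA]); group
  have h2' : R * B⁻¹ = B * R := by (conv_rhs => rw [← iB]); group
  have h3' : B * A⁻¹ = A * B := by (conv_rhs => rw [← iBA]); group
  have h4 : B⁻¹ * A = A⁻¹ * B⁻¹ := by (conv_lhs => rw [← iBA]); group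
  have h4' : B⁻¹ * A⁻¹ = A * B⁻¹ := by (conv_lhs => rw [← hBA]); group
  have c1 : ∀ x : G, R * (A * x) = A⁻¹ * (R * x) := fun x => by rw [← mul_assoc, h1, mul_assoc]
  have c2 : ∀ x : G, R * (B * x) = B⁻¹ * (R * x) := fun x => by rw [← mul_assoc, h2, mul_assoc]
  have c3 : ∀ x : G, B * (A * x) = A⁻¹ * (B * x) := fun x => by rw [← mul_assoc, h3, mul_assoc]
  have c1' : ∀ x : G, R * (A⁻¹ * x) = A * (R * x) := fun x => by rw [← mul_assoc, h1', mul_assoc]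
  have c2' : ∀ x : G, R * (B⁻¹ * x) = B * (R * x) := fun x => by rw [← mul_assoc, h2', mul_assoc]
  have c3' : ∀ x : G, B * (A⁻¹ * x) = A * (B * x) := fun x => by rw [← mul_assoc, h3', mul_assoc]
  have c4 : ∀ x : G, B⁻¹ * (A * x) = A⁻¹ * (B⁻¹ * x) := fun x => by rw [← mul_assoc, h4, mul_assoc]
  have c4' : ∀ x : G, B⁻¹ * (A⁻¹ * x) = A * (B⁻¹ * x) := fun x => by rw [← mul_assoc, h4', mul_assoc]
  have hR4 : R ^ 4 = 1 := by
    have h : R ^ 4 = (R ^ 2) ^ 2 := by group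
    rw [h, hR, ← pow_mul]
    norm_num
    exact hB
  have key : (R * A * B) ^ 4 = (A ^ 4)⁻¹ := by
    have e : (R * A * B) ^ 4 = (A ^ 4)⁻¹ * R ^ 4 := by
      simp only [pow_succ, pow_zero, one_mul, mul_assoc, h1, h2, h3, h1', h2', h3', h4, h4', c1, c2, c3, c1', c2', c3', c4, c4']
      group
    rw [e, hR4, mul_one]
  refine ⟨key, fun m hm hA => ?_⟩
  rw [key, orderOf_inv, Nat.Coprime.orderOf_pow, hA]
  rw [hA]
  have : (4 : ℕ) = 2 ^ 2 := by norm_num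
  rw [this]
  exact Nat.Coprime.pow_right 2 (hm.coprime_two_right)
end
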